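/- arXiv:1909.01676 — 2 statements merged into one kernel-verified Lean document; each statement's English description precedes it below -/
import Mathlib

section
/- Let a : ℕ → {0,1} be the Champernowne-type sequence obtained by concatenating all finite binary words ordered first by length and then lexicographically, and define the coloring φ : ℤ → {0,1} by φ(n) = 0 for n < 0 and φ(n) = a_n for n ≥ 0. Let P be the path graph on ℤ, in which m and n are adjacent if and only if |m − n| = 1. Then the colored graph (P,φ) is aperiodic: every graph automorphism f of P satisfying φ(f(n)) = φ(n) for all n ∈ ℤ is the identity. -/
/-!
An automorphism of the path graph on ℤ is injective and moves neighbours to neighbours, so it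
never reverses direction: it is a translation `n ↦ c + n` or a reflection `n ↦ c - n`.
A colour-preserving translation makes the colouring `c`-periodic; as the colouring vanishes on the
negative integers, periodicity with `c ≠ 0` would force it to vanish everywhere, while `a₁ = 1`.
A reflection would carry the negative integers below `c` onto all integers beyond `c`, but the
sequence `a` has a `1` arbitrarily far out: the last letter of every word `w_j` with `j` odd.
-/

/-- The j-th binary word (j ≥ 2): the binary representation of j with its leading
digit 1 deleted; `false` stands for the digit 0 and `true` for the digit 1. -/
def champWord (j : ℕ) : List Bool := (Nat.bits j).reverse.tail

/-- The concatenation w₂ w₃ ⋯ w_{m+1} of the first m binary words. -/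
def champPrefix (m : ℕ) : List Bool := (List.range m).flatMap (fun i => champWord (i + 2))

/-- The Champernowne-type sequence a : ℕ → {0,1}: the n-th letter of the infinite
concatenation w₂ w₃ w₄ ⋯. -/
def champ (n : ℕ) : Bool := (champPrefix (n + 1)).getD n false

/-- The coloring φ : ℤ → {0,1}: φ(n) = 0 for n < 0 and φ(n) = a_n for n ≥ 0. -/
def champColoring (n : ℤ) : Bool := if n < 0 then false else champ n.toNat

/-- The path graph on ℤ: m and n are adjacent iff |m - n| = 1. -/
def intPathGraph : SimpleGraph ℤ := SimpleGraph.fromRel (fun m n => n = m + 1)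

lemma intPathGraph_adj {m n : ℤ} : intPathGraph.Adj m n ↔ |m - n| = 1 := by
  simp only [intPathGraph, SimpleGraph.fromRel_adj, abs_eq zero_le_one]
  omega

lemma Int.eq_add_or_eq_sub_of_injective_of_abs_sub_eq_one {g : ℤ → ℤ} (hg : g.Injective)
    (h : ∀ n, |g (n + 1) - g n| = 1) : (∀ n, g n = g 0 + n) ∨ (∀ n, g n = g 0 - n) := by
  have h' : ∀ n, g (n + 1) - g n = 1 ∨ g (n + 1) - g n = -1 :=
    fun n => (abs_eq zero_le_one).1 (h n)
  -- two consecutive steps in opposite directions would give `g (n + 2) = g n`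
  have hconsec : ∀ n, g (n + 1 + 1) - g (n + 1) = g (n + 1) - g n := by
    intro n
    have hne : g (n + 1 + 1) ≠ g n := hg.ne (by omega)
    rcases h' n with h1 | h1 <;> rcases h' (n + 1) with h2 | h2 <;> omega
  have hstep : ∀ n, g (n + 1) - g n = g 1 - g 0 := by
    intro n
    induction n using Int.induction_on with
    | zero => simp
    | succ k ih => rw [hconsec, ih]
    | pred k ih => have := hconsec (-k - 1); simp only [sub_add_cancel] at this ⊢; omega
  have hlin : ∀ n, g n = g 0 + n * (g 1 - g 0) := by
    intro n
    induction n using Int.induction_on with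
    | zero => simp
    | succ k ih => have := hstep k; rw [add_mul, one_mul]; omega
    | pred k ih =>
      have := hstep (-k - 1)
      simp only [sub_add_cancel] at this
      rw [sub_mul, one_mul]
      omega
  rcases h' 0 with hd | hd <;> simp only [zero_add] at hd
  · exact .inl fun n => by rw [hlin n, hd, mul_one]
  · exact .inr fun n => by rw [hlin n, hd, mul_neg_one, sub_eq_add_neg]

lemma intPathGraph_embedding_eq_add_or_eq_sub (f : intPathGraph ↪g intPathGraph) :
    (∀ n, f n = f 0 + n) ∨ (∀ n, f n = f 0 - n) :=
  Int.eq_add_or_eq_sub_of_injective_of_abs_sub_eq_one f.injective fun n =>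
    intPathGraph_adj.1 <| f.map_adj_iff.2 <| intPathGraph_adj.2 (by simp)

lemma Function.Periodic.eq_of_forall_neg_eq {α : Type*} {φ : ℤ → α} {c : ℤ}
    (hφ : Function.Periodic φ c) (hc : c ≠ 0) {a : α} (hneg : ∀ n < 0, φ n = a) (n : ℤ) :
    φ n = a := by
  have hc2 : |n| + 1 ≤ (|n| + 1) * (c * c) :=
    le_mul_of_one_le_right (by positivity) (mul_self_pos.2 hc)
  rw [← hφ.int_mul (-(|n| + 1) * c) n]
  exact hneg _ (by push_cast; linarith [le_abs_self n])

lemma champWord_ne_nil {j : ℕ} (hj : 2 ≤ j) : champWord j ≠ [] := by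
  have h1 : 1 < Nat.size j := Nat.lt_size.2 (by simpa using hj)
  rw [← List.length_pos_iff, champWord, List.length_tail, List.length_reverse,
    Nat.size_eq_bits_len]
  omega

lemma champPrefix_succ (m : ℕ) : champPrefix (m + 1) = champPrefix m ++ champWord (m + 2) := by
  simp [champPrefix, List.range_succ]

lemma le_length_champPrefix (m : ℕ) : m ≤ (champPrefix m).length := by
  induction m with
  | zero => simp
  | succ m ih =>
    have := List.length_pos_iff.2 (champWord_ne_nil (j := m + 2) (by omega))
    rw [champPrefix_succ, List.length_append]
    omega

lemma champPrefix_prefix_of_le {m m' : ℕ} (h : m ≤ m') : champPrefix m <+: champPrefix m' := by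
  induction m', h using Nat.le_induction with
  | base => exact List.prefix_refl _
  | succ k _ ih => exact ih.trans (champPrefix_succ k ▸ List.prefix_append _ _)

lemma champ_eq_getElem_champPrefix {n m : ℕ} (h : n < (champPrefix m).length) :
    champ n = (champPrefix m)[n] := by
  have hn : n < (champPrefix (n + 1)).length :=
    (le_length_champPrefix (n + 1)).trans_lt' n.lt_succ_self
  rw [champ, List.getD_eq_getElem _ _ hn]
  rcases Nat.le_total (n + 1) m with hle | hle
  · exact (champPrefix_prefix_of_le hle).getElem hn
  · exact ((champPrefix_prefix_of_le hle).getElem h).symm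

lemma champWord_getLast?_of_odd {k : ℕ} (hk : k ≠ 0) :
    (champWord (2 * k + 1)).getLast? = some true := by
  have hne : Nat.bits k ≠ [] := by
    rw [← List.length_pos_iff, Nat.size_eq_bits_len, Nat.size_pos]
    omega
  rw [champWord, Nat.bit1_bits, List.reverse_cons, List.tail_append, if_neg (by simpa using hne)]
  simp

lemma exists_ge_champ_eq_true (N : ℕ) : ∃ n ≥ N, champ n = true := by
  have hl : 2 * N + 2 ≤ (champPrefix (2 * N + 2)).length := le_length_champPrefix _
  have hlast : (champPrefix (2 * N + 2)).getLast? = some true := by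
    rw [champPrefix_succ, List.getLast?_append, show 2 * N + 1 + 2 = 2 * (N + 1) + 1 by ring,
      champWord_getLast?_of_odd N.succ_ne_zero]
    rfl
  refine ⟨(champPrefix (2 * N + 2)).length - 1, by omega, ?_⟩
  rw [champ_eq_getElem_champPrefix (m := 2 * N + 2) (by omega),
    List.getElem_length_sub_one_eq_getLast]
  exact Option.some.inj ((List.getLast?_eq_some_getLast _).symm.trans hlast)

lemma champColoring_one : champColoring 1 = true := by decide

lemma champColoring_natCast (n : ℕ) : champColoring n = champ n := by
  simp [champColoring]

lemma champColoring_of_neg {n : ℤ} (hn : n < 0) : champColoring n = false := by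
  simp [champColoring, hn]

/-- The colored graph (P,φ), where P is the path graph on ℤ and φ is the
Champernowne-type coloring, is aperiodic: every graph automorphism f of P satisfying
φ(f(n)) = φ(n) for all n ∈ ℤ is the identity. -/
theorem stmt_13 (f : intPathGraph ≃g intPathGraph)
    (hf : ∀ n : ℤ, champColoring (f n) = champColoring n) :
    ∀ n : ℤ, f n = n := by
  obtain htrans | hrefl : (∀ n, f n = f 0 + n) ∨ ∀ n, f n = f 0 - n :=
    intPathGraph_embedding_eq_add_or_eq_sub f.toEmbedding
  · have hper : Function.Periodic champColoring (f 0) := fun n => by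
      rw [add_comm, ← htrans]
      exact hf n
    have hf0 : f 0 = 0 := by
      by_contra hc
      have := hper.eq_of_forall_neg_eq hc (fun _ => champColoring_of_neg) 1
      rw [champColoring_one] at this
      exact Bool.noConfusion this
    intro n
    simpa [hf0] using htrans n
  · obtain ⟨n, hn, hchamp⟩ := exists_ge_champ_eq_true ((f 0).toNat + 1)
    have := hf (f 0 - n)
    rw [show f (f 0 - n) = n by simpa using hrefl (f 0 - n), champColoring_natCast, hchamp,
      champColoring_of_neg (by omega)] at this
    exact Bool.noConfusion this
end

section
/- Let Δ ∈ ℕ and let (X_k, x_k), k ∈ ℕ, be a sequence of pointed, infinite, connected simple graphs in which every vertex has degree at most Δ. Then there exist a strictly increasing function j : ℕ → ℕ, a countable type V, an infinite connected simple graph X on V in which every vertex has degree at most Δ, and a vertex x ∈ V, such that for every n ∈ ℕ there is N ∈ ℕ with the property that for all k ≥ N there is a graph isomorphism from the subgraph of X_{j(k)} induced on the disk D(x_{j(k)}, n) to the subgraph of X induced on the disk D(x, n) sending x_{j(k)} to x. -/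
/-!
Relabel every `X_k` by `ℕ` in breadth-first order from `x_k`, so that `x_k` becomes `0`. With
maximal degree `Δ`, the closed `n`-ball then occupies the labels below `(Δ + 1) ^ n`, and every
neighbour of the label `a` lies below `(Δ + 1) ^ (a + 1)`, uniformly in `k`. Adjacency relations
on `ℕ` live in the compact metrizable space `ℕ → ℕ → Bool`, so a subsequence converges pointwise
to a graph `X` on `ℕ`. The uniform label bounds upgrade pointwise convergence to agreement of the
whole `n`-ball with that of `X` for all large `k`; this yields the isomorphisms, and also the
connectivity and the degree bound of `X`.
-/

open Filter SimpleGraph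

theorem exists_equiv_nat_monotone_comp_symm {α : Type*} [Infinite α] (f : α → ℕ)
    (hf : ∀ n, {a | f a ≤ n}.Finite) : ∃ e : α ≃ ℕ, Monotone (f ∘ e.symm) := by
  have : Countable α := Set.countable_univ_iff.mp <| by
    convert Set.countable_iUnion fun n => (hf n).countable
    ext a
    simpa using ⟨f a, le_rfl⟩
  obtain ⟨c, hc⟩ := exists_injective_nat α
  let _ : LinearOrder α := LinearOrder.lift' (fun a => toLex (f a, c a)) fun a b h =>
    hc (Prod.ext_iff.mp (toLex.injective h)).2
  have hle : ∀ {a b : α}, a ≤ b → f a ≤ f b := fun h => Prod.Lex.monotone_fst _ _ h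
  have hfin : ∀ a : α, (Set.Iio a).Finite := fun a => (hf (f a)).subset fun b hb => hle hb.le
  let e : α → ℕ := fun a => (Set.Iio a).ncard
  have he : StrictMono e := fun a b hab => Set.ncard_lt_ncard (Set.Iio_ssubset_Iio hab) (hfin b)
  have himage : ∀ a, e '' Set.Iio a = Set.Iio (e a) := fun a =>
    Set.eq_of_subset_of_ncard_le (Set.image_subset_iff.mpr fun b hb => he hb)
      (by rw [Set.ncard_image_of_injective _ he.injective]; simp [e])
  have hsurj : Function.Surjective e := by
    intro m
    obtain ⟨a, ha⟩ : ∃ a, m < e a := by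
      by_contra! h
      exact Set.infinite_range_of_injective he.injective
        ((Set.finite_Iic m).subset (Set.range_subset_iff.mpr h))
    obtain ⟨b, -, hb⟩ : m ∈ e '' Set.Iio a := himage a ▸ ha
    exact ⟨b, hb⟩
  let E := Equiv.ofBijective e ⟨he.injective, hsurj⟩
  refine ⟨E, fun m m' hm => hle (he.le_iff_le.mp ?_)⟩
  exact (E.apply_symm_apply m).trans_le (hm.trans (E.apply_symm_apply m').ge)

namespace SimpleGraph

variable {V W : Type*} {G : SimpleGraph V} {G' : SimpleGraph W}

lemma edist_le_add_one_iff {u v : V} {n : ℕ} :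
    G.edist u v ≤ n + 1 ↔ G.edist u v ≤ n ∨ ∃ w, G.edist u w ≤ n ∧ G.Adj w v := by
  refine ⟨fun h => or_iff_not_imp_left.mpr fun hn => ?_, ?_⟩
  · obtain ⟨m, hm⟩ := ENat.ne_top_iff_exists.mp (ne_top_of_le_ne_top (by simp) h)
    have hmn : m = n + 1 := by
      rw [← hm] at h hn
      norm_cast at h hn
      omega
    obtain ⟨p, hp⟩ := exists_walk_of_edist_eq_coe hm.symm
    have hnil : ¬p.Nil := by simp [← Walk.length_eq_zero_iff, hp, hmn]
    refine ⟨p.penultimate, ?_, p.adj_penultimate hnil⟩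
    calc G.edist u p.penultimate ≤ p.dropLast.length := edist_le _
      _ = n := by simp [Walk.length_dropLast, hp, hmn]
  · rintro (h | ⟨w, hw, hadj⟩)
    · exact h.trans (by norm_cast; omega)
    · calc G.edist u v ≤ G.edist u w + G.edist w v := SimpleGraph.edist_triangle
        _ = G.edist u w + 1 := by rw [edist_eq_one_iff_adj.mpr hadj]
        _ ≤ n + 1 := by gcongr

lemma Reachable.dist_le_iff_edist_le {u v : V} (h : G.Reachable u v) {n : ℕ} :
    G.dist u v ≤ n ↔ G.edist u v ≤ n := by
  rw [← h.coe_dist_eq_edist, Nat.cast_le]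

lemma Connected.setOf_dist_le_eq (hconn : G.Connected) (x : V) (n : ℕ) :
    {v | G.dist x v ≤ n} = {v | G.edist x v ≤ n} :=
  Set.ext fun v => (hconn x v).dist_le_iff_edist_le

lemma Connected.exists_adj_dist_eq_of_dist_eq_add_one (hconn : G.Connected) {u v : V} {d : ℕ}
    (h : G.dist u v = d + 1) : ∃ w, G.Adj w v ∧ G.dist u w = d := by
  have hle : G.edist u v ≤ (d + 1 : ℕ) := (hconn u v).dist_le_iff_edist_le.mp h.le
  push_cast at hle
  rcases edist_le_add_one_iff.mp hle with hd | ⟨w, hw, hadj⟩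
  · have := (hconn u v).dist_le_iff_edist_le.mpr hd
    omega
  · have hw' := (hconn u w).dist_le_iff_edist_le.mpr hw
    have htri : G.dist u v ≤ G.dist u w + 1 := by
      simpa [dist_eq_one_iff_adj.mpr hadj] using hconn.dist_triangle (u := u) (v := w) (w := v)
    exact ⟨w, hadj, by omega⟩

lemma Hom.edist_map_le (f : G →g G') (u v : V) : G'.edist (f u) (f v) ≤ G.edist u v := by
  by_cases h : G.Reachable u v
  · obtain ⟨p, hp⟩ := h.exists_walk_length_eq_edist
    rw [← hp]
    simpa using edist_le (p.map f)
  · simp [edist_eq_top_of_not_reachable h]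

lemma Iso.edist_map (φ : G ≃g G') (u v : V) : G'.edist (φ u) (φ v) = G.edist u v :=
  le_antisymm (φ.toHom.edist_map_le u v) (by simpa using φ.symm.toHom.edist_map_le (φ u) (φ v))

lemma Iso.dist_map (φ : G ≃g G') (u v : V) : G'.dist (φ u) (φ v) = G.dist u v := by
  simp [dist, φ.edist_map]

lemma Iso.bijOn_setOf_dist_le (φ : G ≃g G') {x : V} {y : W} (hxy : φ x = y) (n : ℕ) :
    Set.BijOn φ {v | G.dist x v ≤ n} {w | G'.dist y w ≤ n} :=
  φ.toEquiv.bijOn fun v => by simp [← hxy, φ.dist_map]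

lemma Iso.encard_neighborSet (φ : G ≃g G') (v : V) :
    (G'.neighborSet (φ v)).encard = (G.neighborSet v).encard := by
  rw [← φ.image_neighborSet, φ.injective.encard_image]

lemma encard_setOf_edist_le_le {Δ : ℕ} (hdeg : ∀ v, (G.neighborSet v).encard ≤ Δ) (x : V)
    (n : ℕ) : {v | G.edist x v ≤ n}.encard ≤ (Δ + 1) ^ n := by
  induction n with
  | zero => simp [edist_eq_zero_iff]
  | succ n ih =>
    have hfin : {v | G.edist x v ≤ n}.Finite := Set.finite_of_encard_le_coe (by exact_mod_cast ih)
    have hsub : {v | G.edist x v ≤ ↑(n + 1)} ⊆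
        ⋃ w ∈ hfin.toFinset, insert w (G.neighborSet w) := by
      intro v hv
      rcases edist_le_add_one_iff.mp (by exact_mod_cast hv) with hv | ⟨w, hw, hadj⟩
      · exact Set.mem_biUnion (by simpa using hv) (Set.mem_insert v _)
      · exact Set.mem_biUnion (by simpa using hw) (Set.mem_insert_of_mem _ hadj)
    calc _ ≤ _ := Set.encard_le_encard hsub
      _ ≤ ∑ w ∈ hfin.toFinset, (insert w (G.neighborSet w)).encard :=
          hfin.toFinset.set_encard_biUnion_le _
      _ ≤ hfin.toFinset.card • ((Δ : ℕ∞) + 1) :=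
          Finset.sum_le_card_nsmul _ _ _ fun w _ =>
            (Set.encard_insert_le _ _).trans (by gcongr; exact hdeg w)
      _ ≤ (Δ + 1) ^ n * (Δ + 1) := by
          rw [nsmul_eq_mul, ← Set.encard_coe_eq_coe_finsetCard, hfin.coe_toFinset]
          gcongr
      _ = (Δ + 1) ^ (n + 1) := by ring

/-- Stated with `edist` because `dist` is `0` between unreachable vertices, and in the
application `L` is not yet known to be connected. -/
lemma edist_le_iff_of_adj_iff {H L : SimpleGraph V} {u : V} {n : ℕ}
    (hagree : ∀ a, H.edist u a ≤ n → ∀ b, (H.Adj a b ↔ L.Adj a b)) (v : V) :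
    H.edist u v ≤ n ↔ L.edist u v ≤ n := by
  induction n generalizing v with
  | zero => simp [edist_eq_zero_iff]
  | succ n ih =>
    have hagree' : ∀ a, H.edist u a ≤ n → ∀ b, (H.Adj a b ↔ L.Adj a b) :=
      fun a ha => hagree a (ha.trans (by norm_cast; omega))
    push_cast
    simp only [edist_le_add_one_iff, ih hagree']
    refine or_congr_right (exists_congr fun w => and_congr_right fun hw => ?_)
    exact hagree w (((ih hagree' w).mpr hw).trans (by norm_cast; omega)) v

def induceIsoOfAdjIff {H L : SimpleGraph V} {s t : Set V} (hst : ∀ v, v ∈ s ↔ v ∈ t)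
    (hadj : ∀ a ∈ s, ∀ b ∈ s, (H.Adj a b ↔ L.Adj a b)) : H.induce s ≃g L.induce t where
  toEquiv := Equiv.subtypeEquivRight hst
  map_rel_iff' {a b} := (hadj a a.2 b b.2).symm

theorem Connected.exists_iso_monotone_dist [Infinite V] {Δ : ℕ} (hconn : G.Connected)
    (hdeg : ∀ v, (G.neighborSet v).encard ≤ Δ) (x : V) :
    ∃ (H : SimpleGraph ℕ) (φ : G ≃g H), φ x = 0 ∧ Monotone (H.dist 0) := by
  obtain ⟨e, he⟩ := exists_equiv_nat_monotone_comp_symm (G.dist x) fun n =>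
    Set.finite_of_encard_le_coe <| by
      rw [hconn.setOf_dist_le_eq]
      exact_mod_cast encard_setOf_edist_le_le hdeg x n
  have hx : e x = 0 := by
    have h0 : G.dist x (e.symm 0) = 0 := Nat.le_zero.mp (by simpa using he (Nat.zero_le (e x)))
    rw [hconn.dist_eq_zero_iff.mp h0]
    exact e.apply_symm_apply 0
  have hdist : (G.map e.toEmbedding).dist 0 = G.dist x ∘ e.symm := funext fun c => by
    simpa [hx] using (Iso.map e G).dist_map x (e.symm c)
  exact ⟨G.map e.toEmbedding, Iso.map e G, hx, hdist ▸ he⟩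

section BreadthFirst

variable {H : SimpleGraph ℕ} (hconn : H.Connected) (hmono : Monotone (H.dist 0))
include hconn hmono

lemma dist_zero_le_self (a : ℕ) : H.dist 0 a ≤ a := by
  induction a with
  | zero => simp
  | succ a ih =>
    suffices H.dist 0 (a + 1) ≤ H.dist 0 a + 1 by omega
    rcases hd : H.dist 0 (a + 1) with _ | d
    · omega
    obtain ⟨w, -, hw⟩ := hconn.exists_adj_dist_eq_of_dist_eq_add_one hd
    have hwa : w ≤ a := by
      by_contra! h
      have := hmono (show a + 1 ≤ w from h)
      omega
    have := hmono hwa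
    omega

lemma lt_pow_of_dist_zero_le {Δ : ℕ} (hdeg : ∀ v, (H.neighborSet v).encard ≤ Δ) {a n : ℕ}
    (h : H.dist 0 a ≤ n) : a < (Δ + 1) ^ n := by
  have hsub : Set.Iic a ⊆ {b | H.edist 0 b ≤ n} := fun b hb => by
    rw [← hconn.setOf_dist_le_eq]
    exact (hmono hb).trans h
  have := (Set.encard_le_encard hsub).trans (encard_setOf_edist_le_le hdeg 0 n)
  rw [← (Set.finite_Iic a).cast_ncard_eq, Set.ncard_Iic_nat] at this
  exact_mod_cast this

lemma lt_pow_of_adj {Δ : ℕ} (hdeg : ∀ v, (H.neighborSet v).encard ≤ Δ) {a b : ℕ}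
    (h : H.Adj a b) : b < (Δ + 1) ^ (a + 1) := by
  refine lt_pow_of_dist_zero_le hconn hmono hdeg ?_
  have htri := hconn.dist_triangle (u := 0) (v := a) (w := b)
  rw [dist_eq_one_iff_adj.mpr h] at htri
  have := dist_zero_le_self hconn hmono a
  omega

end BreadthFirst

theorem exists_subseq_eventually_adj_iff (H : ℕ → SimpleGraph ℕ) :
    ∃ (L : SimpleGraph ℕ) (j : ℕ → ℕ), StrictMono j ∧
      ∀ a b, ∀ᶠ k in atTop, ((H (j k)).Adj a b ↔ L.Adj a b) := by
  classical
  obtain ⟨f, j, hj, hf⟩ := CompactSpace.tendsto_subseq fun k a b => decide ((H k).Adj a b)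
  have hev : ∀ a b, ∀ᶠ k in atTop, decide ((H (j k)).Adj a b) = f a b := fun a b =>
    tendsto_pure.mp (by simpa [nhds_discrete] using tendsto_pi_nhds.mp (tendsto_pi_nhds.mp hf a) b)
  refine ⟨SimpleGraph.fromRel fun a b => f a b, j, hj, fun a b => ?_⟩
  filter_upwards [hev a b, hev b a] with k hab hba
  rw [fromRel_adj, ← hab, ← hba, decide_eq_true_eq, decide_eq_true_eq]
  exact ⟨fun h => ⟨h.ne, Or.inl h⟩, fun ⟨_, h⟩ => h.elim id Adj.symm⟩

lemma eventually_forall_adj_iff_of_lt {H : ℕ → SimpleGraph ℕ} {L : SimpleGraph ℕ} (β : ℕ → ℕ)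
    (hβ : ∀ k a b, (H k).Adj a b → b < β a)
    (hlim : ∀ a b, ∀ᶠ k in atTop, ((H k).Adj a b ↔ L.Adj a b)) (A : ℕ) :
    ∀ᶠ k in atTop, ∀ a < A, ∀ b, ((H k).Adj a b ↔ L.Adj a b) := by
  set B := (Finset.range A).sup β
  -- No `H k`, hence also not `L`, has an edge from below `A` to `B` or beyond.
  have hfar : ∀ k a b, a < A → B ≤ b → ¬(H k).Adj a b := fun k a b ha hb h =>
    (hβ k a b h).not_ge ((Finset.le_sup (Finset.mem_range.mpr ha)).trans hb)
  have hnear : ∀ᶠ k in atTop, ∀ a ∈ Finset.range A, ∀ b ∈ Finset.range B,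
      ((H k).Adj a b ↔ L.Adj a b) :=
    (Finset.eventually_all _).mpr fun a _ => (Finset.eventually_all _).mpr fun b _ => hlim a b
  filter_upwards [hnear] with k hk a ha b
  by_cases hb : b < B
  · exact hk a (Finset.mem_range.mpr ha) b (Finset.mem_range.mpr hb)
  · refine iff_of_false (hfar k a b ha (not_lt.mp hb)) fun h => ?_
    obtain ⟨k', hk'⟩ := (hlim a b).exists
    exact hfar k' a b ha (not_lt.mp hb) (hk'.mpr h)

section LocalLimit

variable {Δ : ℕ} {H : ℕ → SimpleGraph ℕ} {L : SimpleGraph ℕ}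
  (hconn : ∀ k, (H k).Connected) (hmono : ∀ k, Monotone ((H k).dist 0))
  (hdeg : ∀ k a, ((H k).neighborSet a).encard ≤ Δ)
  (hlim : ∀ a b, ∀ᶠ k in atTop, ((H k).Adj a b ↔ L.Adj a b))
include hconn hmono hdeg hlim

lemma eventually_adj_iff_of_dist_zero_le (n : ℕ) :
    ∀ᶠ k in atTop, ∀ a, (H k).dist 0 a ≤ n → ∀ b, ((H k).Adj a b ↔ L.Adj a b) :=
  (eventually_forall_adj_iff_of_lt _ (fun k _ _ => lt_pow_of_adj (hconn k) (hmono k) (hdeg k))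
    hlim ((Δ + 1) ^ n)).mono fun k hk a ha =>
      hk a (lt_pow_of_dist_zero_le (hconn k) (hmono k) (hdeg k) ha)

lemma eventually_edist_le_iff (n : ℕ) :
    ∀ᶠ k in atTop, ∀ a, ((H k).edist 0 a ≤ n ↔ L.edist 0 a ≤ n) :=
  (eventually_adj_iff_of_dist_zero_le hconn hmono hdeg hlim n).mono fun k hk =>
    edist_le_iff_of_adj_iff fun a ha => hk a (((hconn k) 0 a).dist_le_iff_edist_le.mpr ha)

lemma connected_of_tendsto : L.Connected := by
  refine (connected_iff_exists_forall_reachable L).mpr ⟨0, fun a => ?_⟩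
  obtain ⟨k, hk⟩ := (eventually_edist_le_iff hconn hmono hdeg hlim a).exists
  have hH : (H k).edist 0 a ≤ a :=
    ((hconn k) 0 a).dist_le_iff_edist_le.mp (dist_zero_le_self (hconn k) (hmono k) a)
  exact reachable_of_edist_ne_top (ne_top_of_le_ne_top (ENat.natCast_ne_top a) ((hk a).mp hH))

lemma encard_neighborSet_le_of_tendsto (a : ℕ) : (L.neighborSet a).encard ≤ Δ := by
  obtain ⟨k, hk⟩ := (eventually_adj_iff_of_dist_zero_le hconn hmono hdeg hlim a).exists
  have : L.neighborSet a = (H k).neighborSet a :=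
    Set.ext fun b => (hk a (dist_zero_le_self (hconn k) (hmono k) a) b).symm
  exact this ▸ hdeg k a

lemma eventually_exists_iso_induce_setOf_dist_le (n : ℕ) :
    ∀ᶠ k in atTop, ∃ ψ : (H k).induce {a | (H k).dist 0 a ≤ n} ≃g L.induce {a | L.dist 0 a ≤ n},
      (ψ ⟨0, by simp⟩ : ℕ) = 0 := by
  filter_upwards [eventually_adj_iff_of_dist_zero_le hconn hmono hdeg hlim n,
    eventually_edist_le_iff hconn hmono hdeg hlim n] with k hadj hball
  have hball' : ∀ a, (H k).dist 0 a ≤ n ↔ L.dist 0 a ≤ n := fun a => by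
    rw [((hconn k) 0 a).dist_le_iff_edist_le,
      ((connected_of_tendsto hconn hmono hdeg hlim) 0 a).dist_le_iff_edist_le]
    exact hball a
  exact ⟨induceIsoOfAdjIff hball' fun a ha b _ => hadj a ha b, rfl⟩

end LocalLimit

theorem exists_subseq_iso_induce_setOf_dist_le {Δ : ℕ} {H : ℕ → SimpleGraph ℕ}
    (hconn : ∀ k, (H k).Connected) (hmono : ∀ k, Monotone ((H k).dist 0))
    (hdeg : ∀ k a, ((H k).neighborSet a).encard ≤ Δ) :
    ∃ (L : SimpleGraph ℕ) (j : ℕ → ℕ), StrictMono j ∧ L.Connected ∧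
      (∀ a, (L.neighborSet a).encard ≤ Δ) ∧ ∀ n, ∀ᶠ k in atTop,
        ∃ ψ : (H (j k)).induce {a | (H (j k)).dist 0 a ≤ n} ≃g L.induce {a | L.dist 0 a ≤ n},
          (ψ ⟨0, by simp⟩ : ℕ) = 0 := by
  obtain ⟨L, j, hj, hlim⟩ := exists_subseq_eventually_adj_iff H
  have hconnj := fun k => hconn (j k)
  have hmonoj := fun k => hmono (j k)
  have hdegj := fun k => hdeg (j k)
  exact ⟨L, j, hj, connected_of_tendsto hconnj hmonoj hdegj hlim,
    encard_neighborSet_le_of_tendsto hconnj hmonoj hdegj hlim,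
    eventually_exists_iso_induce_setOf_dist_le hconnj hmonoj hdegj hlim⟩

end SimpleGraph

/-- Let Δ ∈ ℕ and let (X_k, x_k) be a sequence of pointed, infinite,
connected simple graphs of maximum degree at most Δ. Then there exist a subsequence
j, a pointed, infinite, connected simple graph (X,x) on a countable vertex type V of
maximum degree at most Δ, such that for every n ∈ ℕ, for all large enough k, the disk
D(x_{j(k)}, n) in X_{j(k)} is isomorphic to the disk D(x,n) in X via a pointed
isomorphism of induced subgraphs. -/
theorem stmt_16 (Δ : ℕ) (V : ℕ → Type) (G : ∀ k : ℕ, SimpleGraph (V k))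
    (hinf : ∀ k, Infinite (V k)) (hconn : ∀ k, (G k).Connected)
    (hdeg : ∀ k, ∀ v : V k, ((G k).neighborSet v).encard ≤ Δ)
    (x : ∀ k : ℕ, V k) :
    ∃ j : ℕ → ℕ, StrictMono j ∧
    ∃ (W : Type) (GW : SimpleGraph W) (xW : W),
      Countable W ∧ Infinite W ∧ GW.Connected ∧
      (∀ w : W, (GW.neighborSet w).encard ≤ Δ) ∧
      ∀ n : ℕ, ∃ N : ℕ, ∀ k : ℕ, N ≤ k →
        ∃ h : ((G (j k)).induce {v : V (j k) | (G (j k)).dist (x (j k)) v ≤ n}) ≃g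
              (GW.induce {w : W | GW.dist xW w ≤ n}),
          (h ⟨x (j k), by simp [SimpleGraph.dist_self]⟩ : W) = xW := by
  choose H φ hφx hmono using fun k =>
    haveI := hinf k
    (hconn k).exists_iso_monotone_dist (hdeg k) (x k)
  have hdegH : ∀ k a, ((H k).neighborSet a).encard ≤ Δ := fun k a =>
    (φ k).apply_symm_apply a ▸ ((φ k).encard_neighborSet _).trans_le (hdeg k _)
  obtain ⟨L, j, hj, hconnL, hdegL, hiso⟩ := exists_subseq_iso_induce_setOf_dist_le
    (fun k => (φ k).connected_iff.mp (hconn k)) hmono hdegH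
  refine ⟨j, hj, ℕ, L, 0, inferInstance, inferInstance, hconnL, hdegL, fun n => ?_⟩
  obtain ⟨N, hN⟩ := eventually_atTop.mp (hiso n)
  refine ⟨N, fun k hk => ?_⟩
  obtain ⟨ψ, hψ⟩ := hN k hk
  have hbij := (φ (j k)).bijOn_setOf_dist_le (hφx (j k)) n
  refine ⟨((φ (j k)).induce hbij).trans ψ, ?_⟩
  rw [RelIso.trans_apply, show (φ (j k)).induce hbij ⟨x (j k), _⟩ = ⟨0, by simp⟩ from
    Subtype.ext (hφx (j k))]
  exact hψ
end
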